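/- Let n be a positive even integer and write n = 2^k·s with k ≥ 1 and s odd. Suppose there is no positive integer t with 2^t ≡ −1 (mod s). Then the set {r ∈ ℛₙ : |r| = 1} contains an element of infinite order, i.e., there exists r ∈ ℛₙ with |r| = 1 and r^m ≠ 1 for every positive integer m. -/

import Mathlib

open Complex

/-- `ℛₙ = ℤ[ζ_{2n}, 1/2]`, the smallest subring of `ℂ` containing `ζ_{2n} = e^{iπ/n}`
and `1/2`. -/
noncomputable def Rring (n : ℕ) : Subring ℂ :=
  Subring.closure {Complex.exp (Complex.I * (Real.pi / n)), (1 / 2 : ℂ)}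

open Polynomial

namespace AdjoinRoot

noncomputable def liftHom {R S : Type*} [CommRing R] [CommRing S] [Algebra R S] (f : R[X])
    (x : S) (hfx : aeval x f = 0) : AdjoinRoot f →ₐ[R] S :=
  liftAlgHom f (Algebra.ofId R S) x hfx

theorem liftHom_mk {R S : Type*} [CommRing R] [CommRing S] [Algebra R S] {f : R[X]}
    {x : S} {hfx : aeval x f = 0} {g : R[X]} : liftHom f x hfx (mk f g) = aeval x g := rfl

theorem liftHom_root {R S : Type*} [CommRing R] [CommRing S] [Algebra R S] {f : R[X]}
    (x : S) (hfx : aeval x f = 0) : liftHom f x hfx (root f) = x :=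
  liftAlgHom_root f _ x hfx

end AdjoinRoot

/-- evaluation of the integer cyclotomic polynomial at a primitive root vanishes -/
lemma cycl_aeval_zero {R₀ R : Type*} [CommRing R₀] [CommRing R] [IsDomain R] [Algebra R₀ R]
    {s : ℕ} (hs : 0 < s) {x : R} (hx : IsPrimitiveRoot x s) :
    (Polynomial.aeval x) (Polynomial.cyclotomic s R₀) = 0 := by
  rw [Polynomial.aeval_def, Polynomial.eval₂_eq_eval_map, Polynomial.map_cyclotomic]
  exact hx.isRoot_cyclotomic hs

lemma Fpart {F : Type*} [Field F] {s d : ℕ} (h3 : 3 ≤ s) (hodd : Odd s)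
    [Algebra (ZMod 2) F] [FiniteDimensional (ZMod 2) F]
    (hrank : Module.finrank (ZMod 2) F ≤ d)
    (hd : ∀ t : ℕ, 0 < t → s ∣ 2 ^ t - 1 → d ≤ t)
    (hnd : ∀ t : ℕ, 0 < t → ¬ (s ∣ 2 ^ t + 1))
    (θu : Fˣ) (hθ : orderOf (θu : F) = s) :
    Polynomial.eval ((θu : F))
      ((minpoly (ZMod 2) ((θu : F))).map (algebraMap (ZMod 2) F)) = 0 ∧
    Polynomial.eval (((θu⁻¹ : Fˣ) : F))
      ((minpoly (ZMod 2) ((θu : F))).map (algebraMap (ZMod 2) F)) ≠ 0 := by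
  classical
  haveI : CharP F 2 := charP_of_injective_algebraMap (algebraMap (ZMod 2) F).injective 2
  set θ : F := (θu : F) with hθdef
  have hint : IsIntegral (ZMod 2) θ := IsIntegral.of_finite (ZMod 2) θ
  set M : Polynomial (ZMod 2) := minpoly (ZMod 2) θ with hM
  set Mf : Polynomial F := M.map (algebraMap (ZMod 2) F) with hMf
  have hMmonic : M.Monic := minpoly.monic hint
  have hMfne : Mf ≠ 0 := (hMmonic.map _).ne_zero
  have h0 : Mf.eval θ = 0 := by
    have := minpoly.aeval (ZMod 2) θ
    rwa [Polynomial.aeval_def, Polynomial.eval₂_eq_eval_map] at this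
  -- squaring preserves roots
  have hstep : ∀ x : F, Mf.eval x = 0 → Mf.eval (x ^ 2) = 0 := by
    intro x hx
    have hfrob : frobenius (ZMod 2) 2 = RingHom.id (ZMod 2) := by
      ext y; simpa [frobenius_def] using ZMod.pow_card y
    have hexp : (Polynomial.expand (ZMod 2) 2) M = M ^ 2 := by
      have h := Polynomial.map_frobenius_expand 2 M
      rwa [hfrob, Polynomial.map_id] at h
    have : Mf.eval (x ^ 2) = (Mf.eval x) ^ 2 := by
      rw [← Polynomial.expand_eval 2 Mf x, hMf, ← Polynomial.map_expand, hexp,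
        Polynomial.map_pow, Polynomial.eval_pow]
    rw [this, hx]; ring
  have hroots : ∀ i : ℕ, Mf.eval (θ ^ (2 ^ i)) = 0 := by
    intro i; induction i with
    | zero => simpa using h0
    | succ i ih =>
      have : θ ^ (2 ^ (i+1)) = (θ ^ (2 ^ i)) ^ 2 := by
        rw [← pow_mul, pow_succ]
      rw [this]; exact hstep _ ih
  have hordu : orderOf θu = s := by rw [← orderOf_units]; exact hθ
  have hscop : Nat.Coprime s 2 := by
    have : ¬ (2 ∣ s) := by
      rcases hodd with ⟨m, rfl⟩; omega
    rcases Nat.coprime_or_dvd_of_prime Nat.prime_two s with h | h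
    · exact h.symm
    · exact absurd h this
  -- distinctness of θ^(2^i) for i < d
  have hdistinct : ∀ i j : ℕ, i < d → j < d → θ ^ (2 ^ i) = θ ^ (2 ^ j) → i = j := by
    have key : ∀ i j : ℕ, i < j → j < d → θ ^ (2 ^ i) ≠ θ ^ (2 ^ j) := by
      intro i j hij hjd heq
      have hequ : θu ^ (2 ^ i) = θu ^ (2 ^ j) := by
        apply Units.ext; push_cast; exact heq
      have hmod : 2 ^ j ≡ 2 ^ i [MOD s] := by
        have := (pow_eq_pow_iff_modEq (x := θu)).mp hequ.symm
        rwa [hordu] at this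
      have hle : 2 ^ i ≤ 2 ^ j := Nat.pow_le_pow_right (by norm_num) hij.le
      have hdvd : s ∣ 2 ^ j - 2 ^ i := (Nat.modEq_iff_dvd' hle).mp hmod.symm
      have hfac : 2 ^ j - 2 ^ i = 2 ^ i * (2 ^ (j - i) - 1) := by
        have h1 : 2 ^ j = 2 ^ i * 2 ^ (j - i) := by
          rw [← pow_add]; congr 1; omega
        have h2 : (1:ℕ) ≤ 2 ^ (j-i) := Nat.one_le_two_pow
        rw [h1, Nat.mul_sub, mul_one]
      rw [hfac] at hdvd
      have hcop : Nat.Coprime s (2 ^ i) := hscop.pow_right i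
      have hdvd2 : s ∣ 2 ^ (j - i) - 1 := by
        exact (Nat.Coprime.dvd_of_dvd_mul_left hcop hdvd)
      have := hd (j - i) (by omega) hdvd2
      omega
    intro i j hi hj heq
    rcases lt_trichotomy i j with h | h | h
    · exact absurd heq (key i j h hj)
    · exact h
    · exact absurd heq.symm (key j i h hi)
  set T : Finset F := (Finset.range d).image (fun i => θ ^ (2 ^ i)) with hT
  have hTcard : T.card = d := by
    rw [hT, Finset.card_image_of_injOn, Finset.card_range]
    intro i hi j hj heq
    exact hdistinct i j (Finset.mem_range.mp hi) (Finset.mem_range.mp hj) heq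
  have hTsub : T ⊆ Mf.roots.toFinset := by
    intro x hx
    rcases Finset.mem_image.mp hx with ⟨i, _, rfl⟩
    rw [Multiset.mem_toFinset, Polynomial.mem_roots hMfne]
    exact hroots i
  constructor
  · exact h0
  · intro hinvroot
    set θi : F := ((θu⁻¹ : Fˣ) : F) with hθi
    have hθinotT : θi ∉ T := by
      intro hmem
      rcases Finset.mem_image.mp hmem with ⟨i, hi, heq⟩
      have hequ : θu ^ (2 ^ i) = θu⁻¹ := by
        apply Units.ext; rw [Units.val_pow_eq_pow_val]; exact heq
      have h1 : θu ^ (2 ^ i + 1) = 1 := by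
        rw [pow_succ, hequ, inv_mul_cancel]
      have hdvd : s ∣ 2 ^ i + 1 := by
        have := orderOf_dvd_of_pow_eq_one h1
        rwa [hordu] at this
      rcases Nat.eq_zero_or_pos i with rfl | hipos
      · simp at hdvd
        have := Nat.le_of_dvd (by norm_num) hdvd
        omega
      · exact hnd i hipos hdvd
    have hsub2 : insert θi T ⊆ Mf.roots.toFinset := by
      intro x hx
      rcases Finset.mem_insert.mp hx with rfl | hx
      · rw [Multiset.mem_toFinset, Polynomial.mem_roots hMfne]
        exact hinvroot
      · exact hTsub hx
    have hcard2 : d + 1 ≤ Mf.roots.toFinset.card := by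
      have := Finset.card_le_card hsub2
      rwa [Finset.card_insert_of_notMem hθinotT, hTcard] at this
    have hcard3 : Mf.roots.toFinset.card ≤ Mf.natDegree := by
      refine le_trans (Multiset.toFinset_card_le _) ?_
      exact Polynomial.card_roots' Mf
    have hdeg : Mf.natDegree ≤ d := by
      rw [hMmonic.natDegree_map]
      have h1 : (M.degree) ≤ (Module.finrank (ZMod 2) F : WithBot ℕ) := minpoly.degree_le θ
      have h2 : M.degree ≤ (d : WithBot ℕ) := le_trans h1 (by exact_mod_cast hrank)
      exact Polynomial.natDegree_le_iff_degree_le.mpr h2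
    omega

set_option maxHeartbeats 3000000 in
set_option synthInstance.maxHeartbeats 400000 in
open Polynomial in
lemma master (s : ℕ) (h3 : 3 ≤ s) (hodd : Odd s)
    (hnd : ∀ t : ℕ, 0 < t → ¬ (s ∣ 2 ^ t + 1))
    (z : ℂ) (hz : IsPrimitiveRoot z s) :
    ∃ x g : ℂ, x ∈ Subring.closure {z} ∧ g ∈ Subring.closure {z} ∧
      (∃ N : ℕ, x * (starRingEnd ℂ) x * g = 2 ^ N) ∧
      (∀ m : ℕ, 0 < m → x ^ m ≠ ((starRingEnd ℂ) x) ^ m) := by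
  classical
  have spos : 0 < s := by omega
  haveI : NeZero s := ⟨by omega⟩
  -- the order d of 2 mod s
  have hcop2s : Nat.Coprime 2 s := by
    refine (Nat.Prime.coprime_iff_not_dvd Nat.prime_two).mpr ?_
    rcases hodd with ⟨m, rfl⟩; omega
  set u : (ZMod s)ˣ := ZMod.unitOfCoprime 2 hcop2s with hu
  set d : ℕ := orderOf u with hdd
  have dpos : 0 < d := orderOf_pos u
  have hcast2 : ((u : ZMod s)) = ((2 : ℕ) : ZMod s) := ZMod.coe_unitOfCoprime 2 hcop2s
  have hdvd1 : s ∣ 2 ^ d - 1 := by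
    have h1 : u ^ d = 1 := pow_orderOf_eq_one u
    have h2 : ((2 : ℕ) : ZMod s) ^ d = ((1 : ℕ) : ZMod s) := by
      rw [← hcast2]
      have := congrArg (Units.val) h1
      simpa using this
    have h3 : ((2 ^ d : ℕ) : ZMod s) = ((1 : ℕ) : ZMod s) := by push_cast; exact_mod_cast h2
    have h4 : 2 ^ d ≡ 1 [MOD s] := (ZMod.natCast_eq_natCast_iff _ _ _).mp h3
    exact (Nat.modEq_iff_dvd' Nat.one_le_two_pow).mp h4.symm
  have hdmin : ∀ t : ℕ, 0 < t → s ∣ 2 ^ t - 1 → d ≤ t := by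
    intro t ht hdvd
    have h4 : 2 ^ t ≡ 1 [MOD s] := ((Nat.modEq_iff_dvd' Nat.one_le_two_pow).mpr hdvd).symm
    have h3 : ((2 ^ t : ℕ) : ZMod s) = ((1 : ℕ) : ZMod s) := (ZMod.natCast_eq_natCast_iff _ _ _).mpr h4
    have h1 : u ^ t = 1 := by
      apply Units.ext
      push_cast
      rw [hcast2]
      push_cast at h3 ⊢
      exact h3
    exact Nat.le_of_dvd ht (orderOf_dvd_of_pow_eq_one h1)
  -- the finite field
  set F := GaloisField 2 d with hF
  have hcardF : Nat.card F = 2 ^ d := GaloisField.card 2 d dpos.ne'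
  have hcardFx : Nat.card Fˣ = 2 ^ d - 1 := by
    rw [Nat.card_units, hcardF]
  obtain ⟨gg, hgg⟩ := IsCyclic.exists_ofOrder_eq_natCard (α := Fˣ)
  set L : ℕ := 2 ^ d - 1 with hL
  have hLpos : 0 < L := by
    have : 2 ≤ 2 ^ d := by
      calc 2 = 2 ^ 1 := (pow_one 2).symm
      _ ≤ 2 ^ d := Nat.pow_le_pow_right (by norm_num) dpos
    omega
  have hggL : orderOf gg = L := by rw [hgg, hcardFx]
  set θu : Fˣ := gg ^ (L / s) with hθu
  have hsL : s ∣ L := hdvd1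
  have hθuord : orderOf θu = s := by
    rw [hθu, orderOf_pow, hggL]
    have h1 : L / s ∣ L := Nat.div_dvd_of_dvd hsL
    rw [Nat.gcd_eq_right h1]
    exact Nat.div_div_self hsL hLpos.ne'
  have hθ : orderOf ((θu : F)) = s := by rw [orderOf_units]; exact hθuord
  have hθprim : IsPrimitiveRoot ((θu : F)) s := hθ ▸ IsPrimitiveRoot.orderOf ((θu : F))
  have hθiprim : IsPrimitiveRoot (((θu⁻¹ : Fˣ) : F)) s := by
    have h1 : orderOf (((θu⁻¹ : Fˣ) : F)) = s := by
      rw [orderOf_units, orderOf_inv]; exact hθuord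
    exact h1 ▸ IsPrimitiveRoot.orderOf _
  have hrank : Module.finrank (ZMod 2) F ≤ d := le_of_eq (GaloisField.finrank 2 dpos.ne')
  obtain ⟨hMf0, hMfinv⟩ := Fpart h3 hodd hrank hdmin hnd θu hθ
  set M : Polynomial (ZMod 2) := minpoly (ZMod 2) ((θu : F)) with hM
  set Mf : Polynomial F := M.map (algebraMap (ZMod 2) F) with hMfdef
  obtain ⟨P, hP⟩ := Polynomial.map_surjective (Int.castRingHom (ZMod 2))
    ZMod.intCast_surjective M
  -- the cyclotomic field
  set sP : ℕ+ := ⟨s, spos⟩ with hsP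
  set K := CyclotomicField sP ℚ with hK
  haveI : NeZero ((sP : ℕ) : ℚ) := ⟨by simp⟩
  haveI : IsCyclotomicExtension {(sP : ℕ)} ℚ K := CyclotomicField.isCyclotomicExtension _ _
  haveI : NumberField K := IsCyclotomicExtension.numberField {(sP : ℕ)} ℚ K
  haveI : FiniteDimensional ℚ K := IsCyclotomicExtension.finiteDimensional {(sP : ℕ)} ℚ K
  set ζ : K := IsCyclotomicExtension.zeta sP ℚ K with hζdef
  have hζ : IsPrimitiveRoot ζ s := IsCyclotomicExtension.zeta_spec sP ℚ K
  set O := NumberField.RingOfIntegers K with hO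
  set ζO : O := ⟨ζ, hζ.isIntegral spos⟩ with hζO
  have hζOcoe : algebraMap O K ζO = ζ := rfl
  -- the maps out of A = ℤ[x]/(Φ_s)
  have haevalζO : (Polynomial.aeval ζO) (Polynomial.cyclotomic s ℤ) = 0 := by
    have h1 : algebraMap O K ((Polynomial.aeval ζO) (Polynomial.cyclotomic s ℤ)) = 0 := by
      rw [← Polynomial.aeval_algebraMap_apply, hζOcoe, cycl_aeval_zero spos hζ]
    exact (map_eq_zero_iff _ NumberField.RingOfIntegers.coe_injective).mp h1
  set jA : AdjoinRoot (Polynomial.cyclotomic s ℤ) →ₐ[ℤ] O :=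
    AdjoinRoot.liftHom _ ζO haevalζO with hjA
  set ιK : AdjoinRoot (Polynomial.cyclotomic s ℤ) →ₐ[ℤ] K :=
    AdjoinRoot.liftHom _ ζ (cycl_aeval_zero spos hζ) with hιK
  have hιjA : ∀ a, algebraMap O K (jA a) = ιK a := by
    have h1 : (IsScalarTower.toAlgHom ℤ O K).comp jA = ιK := by
      apply AdjoinRoot.algHom_ext
      simp only [AlgHom.comp_apply, hjA, hιK, AdjoinRoot.liftHom_root,
        IsScalarTower.coe_toAlgHom']
      exact hζOcoe
    intro a
    have h2 := AlgHom.congr_fun h1 a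
    simpa [AlgHom.comp_apply] using h2
  have hιKinj : Function.Injective ιK := by
    rw [injective_iff_map_eq_zero]
    intro a ha
    induction a using AdjoinRoot.induction_on with
    | _ p =>
      rw [hιK, AdjoinRoot.liftHom_mk] at ha
      have hdvd : minpoly ℤ ζ ∣ p := minpoly.isIntegrallyClosed_dvd (hζ.isIntegral spos) ha
      erw [← Polynomial.cyclotomic_eq_minpoly hζ spos] at hdvd
      exact AdjoinRoot.mk_eq_zero.mpr hdvd
  have hjAinj : Function.Injective jA := by
    intro a b hab
    apply hιKinj
    rw [← hιjA, ← hιjA, hab]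
  set ψA : AdjoinRoot (Polynomial.cyclotomic s ℤ) →ₐ[ℤ] F :=
    AdjoinRoot.liftHom _ ((θu : F)) (cycl_aeval_zero spos hθprim) with hψA
  set ψA' : AdjoinRoot (Polynomial.cyclotomic s ℤ) →ₐ[ℤ] F :=
    AdjoinRoot.liftHom _ (((θu⁻¹ : Fˣ) : F)) (cycl_aeval_zero spos hθiprim) with hψA'
  -- conjugation on A
  have hζpow : ζ ^ (s - 1) = ζ⁻¹ := by
    have h1 : ζ ^ (s - 1) * ζ = 1 := by
      rw [← pow_succ]
      have hs1 : s - 1 + 1 = s := by omega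
      rw [hs1]; exact hζ.pow_eq_one
    exact eq_inv_of_mul_eq_one_left h1
  set τA : AdjoinRoot (Polynomial.cyclotomic s ℤ) →ₐ[ℤ] AdjoinRoot (Polynomial.cyclotomic s ℤ) :=
    AdjoinRoot.liftHom _ ((AdjoinRoot.root (Polynomial.cyclotomic s ℤ)) ^ (s - 1)) (by
      apply hιKinj
      rw [← Polynomial.aeval_algHom_apply, map_zero]
      rw [map_pow, hιK, AdjoinRoot.liftHom_root, hζpow]
      exact cycl_aeval_zero spos hζ.inv) with hτA
  have hτAroot : τA (AdjoinRoot.root (Polynomial.cyclotomic s ℤ)) =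
      (AdjoinRoot.root (Polynomial.cyclotomic s ℤ)) ^ (s - 1) := by
    rw [hτA, AdjoinRoot.liftHom_root]
  -- θ powers
  have hθpow : ((θu : F)) ^ (s - 1) = ((θu⁻¹ : Fˣ) : F) := by
    have h1 : ((θu : F)) ^ (s - 1) * ((θu : F)) = 1 := by
      rw [← pow_succ]
      have hs1 : s - 1 + 1 = s := by omega
      rw [hs1, ← hθ]
      exact pow_orderOf_eq_one _
    have h2 := eq_inv_of_mul_eq_one_left h1
    rw [h2, ← Units.val_inv_eq_inv_val]
  have hψτ : ∀ a, ψA (τA a) = ψA' a := by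
    have h1 : ψA.comp τA = ψA' := by
      apply AdjoinRoot.algHom_ext
      rw [AlgHom.comp_apply, hτAroot, map_pow, hψA, hψA', AdjoinRoot.liftHom_root,
        AdjoinRoot.liftHom_root, hθpow]
    intro a; exact AlgHom.congr_fun h1 a
  -- Galois conjugation on K
  have hζP : IsPrimitiveRoot ζ ((sP : ℕ+) : ℕ) := hζ
  set pb : PowerBasis ℚ K := IsPrimitiveRoot.powerBasis (n := sP) ℚ hζP with hpb
  have hpbgen : pb.gen = ζ := IsPrimitiveRoot.powerBasis_gen (n := sP) ℚ hζP
  have haevalinv : (Polynomial.aeval ζ⁻¹) (minpoly ℚ pb.gen) = 0 := by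
    rw [hpbgen, ← Polynomial.cyclotomic_eq_minpoly_rat hζ spos]
    exact cycl_aeval_zero spos hζ.inv
  set σK' : K →ₐ[ℚ] K := pb.lift ζ⁻¹ haevalinv with hσK'
  have hσζ : σK' ζ = ζ⁻¹ := by
    have := pb.lift_gen ζ⁻¹ haevalinv
    rwa [hpbgen] at this
  set σK : K ≃ₐ[ℚ] K := AlgEquiv.ofBijective σK' σK'.bijective with hσK
  have hσKζ : σK ζ = ζ⁻¹ := hσζ
  set τO : O ≃+* O := NumberField.RingOfIntegers.mapRingEquiv σK with hτO
  have hτcoe : ∀ x : O, (algebraMap O K (τO x)) = σK (algebraMap O K x) := fun x => rfl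
  have hjτ : ∀ a, jA (τA a) = τO (jA a) := by
    have h1 : jA.comp τA = ((τO : O →+* O).toIntAlgHom).comp jA := by
      apply AdjoinRoot.algHom_ext
      rw [AlgHom.comp_apply, AlgHom.comp_apply, hτAroot, map_pow]
      apply NumberField.RingOfIntegers.coe_injective
      have hL : algebraMap O K ((jA (AdjoinRoot.root (Polynomial.cyclotomic s ℤ))) ^ (s-1)) = ζ ^ (s-1) := by
        rw [map_pow, hjA, AdjoinRoot.liftHom_root, hζOcoe]
      have hR : algebraMap O K (((τO : O →+* O).toIntAlgHom) (jA (AdjoinRoot.root (Polynomial.cyclotomic s ℤ)))) = ζ⁻¹ := by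
        have : ((τO : O →+* O).toIntAlgHom) (jA (AdjoinRoot.root (Polynomial.cyclotomic s ℤ))) = τO ζO := by
          rw [hjA, AdjoinRoot.liftHom_root]; rfl
        rw [this, hτcoe, hζOcoe, hσKζ]
      rw [hL, hR, hζpow]
    intro a; exact AlgHom.congr_fun h1 a
  -- embedding into ℂ
  have haevalz : (Polynomial.aeval z) (minpoly ℚ pb.gen) = 0 := by
    rw [hpbgen, ← Polynomial.cyclotomic_eq_minpoly_rat hζ spos]
    exact cycl_aeval_zero spos hz
  set φK : K →ₐ[ℚ] ℂ := pb.lift z haevalz with hφK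
  have hφζ : φK ζ = z := by
    have := pb.lift_gen z haevalz
    rwa [hpbgen] at this
  have hznorm : ‖z‖ = 1 := by
    have h1 : ‖z‖ ^ s = 1 := by
      rw [← norm_pow, hz.pow_eq_one, norm_one]
    have h2 : (0:ℝ) ≤ ‖z‖ := norm_nonneg z
    by_contra hne
    rcases lt_or_gt_of_ne hne with hlt | hgt
    · have h4 : ‖z‖ ^ s < 1 := pow_lt_one₀ h2 hlt (by omega)
      rw [h1] at h4; exact lt_irrefl 1 h4
    · have h4 : 1 < ‖z‖ ^ s := one_lt_pow₀ hgt (by omega)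
      rw [h1] at h4; exact lt_irrefl 1 h4
  have hzinv : z⁻¹ = (starRingEnd ℂ) z := Complex.inv_eq_conj hznorm
  have hconjφ : ∀ y : K, φK (σK y) = (starRingEnd ℂ) (φK y) := by
    have h1 : φK.comp σK.toAlgHom = ((starRingEnd ℂ).toRatAlgHom).comp φK := by
      apply pb.algHom_ext
      rw [AlgHom.comp_apply, AlgHom.comp_apply, hpbgen]
      have hL : φK (σK ζ) = z⁻¹ := by rw [hσKζ, map_inv₀, hφζ]
      have hR : ((starRingEnd ℂ).toRatAlgHom) (φK ζ) = (starRingEnd ℂ) z := by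
        rw [hφζ]; rfl
      rw [show σK.toAlgHom ζ = σK ζ from rfl, hL, hR, hzinv]
    intro y
    have h2 := AlgHom.congr_fun h1 y
    simpa using h2
  set ΦA : AdjoinRoot (Polynomial.cyclotomic s ℤ) →+* ℂ :=
    ((φK.toRingHom).comp (algebraMap O K)).comp jA.toRingHom with hΦA
  have hΦa : ∀ a, ΦA a = φK (algebraMap O K (jA a)) := fun a => rfl
  have hΦτ : ∀ a, ΦA (τA a) = (starRingEnd ℂ) (ΦA a) := by
    intro a
    rw [hΦa, hΦa, hjτ, hτcoe, hconjφ]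
  have hΦinj : Function.Injective ΦA := by
    intro a b hab
    apply hjAinj
    apply NumberField.RingOfIntegers.coe_injective
    apply φK.toRingHom.injective
    exact hab
  have hΦmem : ∀ a, ΦA a ∈ Subring.closure {z} := by
    intro a
    induction a using AdjoinRoot.induction_on with
    | _ p =>
      have h1 : ΦA (AdjoinRoot.mk (Polynomial.cyclotomic s ℤ) p) = (Polynomial.aeval z) p := by
        rw [hΦa, hjA, AdjoinRoot.liftHom_mk, ← Polynomial.aeval_algebraMap_apply, hζOcoe]
        have h2 := Polynomial.aeval_algHom_apply (φK.toRingHom.toIntAlgHom) ζ p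
        have h3 : (φK.toRingHom.toIntAlgHom) ζ = z := hφζ
        rw [h3] at h2
        exact h2.symm
      rw [h1, Polynomial.aeval_eq_sum_range]
      apply Subring.sum_mem
      intro i _
      apply Subring.zsmul_mem
      apply pow_mem
      exact Subring.subset_closure rfl
  -- prime ideals
  set pA : Ideal (AdjoinRoot (Polynomial.cyclotomic s ℤ)) := RingHom.ker ψA.toRingHom with hpA
  haveI hpAprime : pA.IsPrime := RingHom.ker_isPrime _
  letI : Algebra (AdjoinRoot (Polynomial.cyclotomic s ℤ)) O := jA.toRingHom.toAlgebra
  have halgjA : algebraMap (AdjoinRoot (Polynomial.cyclotomic s ℤ)) O = jA.toRingHom := rfl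
  haveI : IsScalarTower ℤ (AdjoinRoot (Polynomial.cyclotomic s ℤ)) O := by
    apply IsScalarTower.of_algebraMap_eq
    intro x
    rw [halgjA]
    simp [map_intCast]
  haveI : Algebra.IsIntegral ℤ O := Algebra.IsIntegral.of_finite ℤ O
  haveI : Algebra.IsIntegral (AdjoinRoot (Polynomial.cyclotomic s ℤ)) O :=
    Algebra.IsIntegral.tower_top ℤ
  obtain ⟨PP, -, hPPprime, hPPcomap⟩ :=
    Ideal.exists_ideal_over_prime_of_isIntegral pA (⊥ : Ideal O) (by
      intro x hx
      rw [Ideal.mem_comap] at hx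
      rw [Ideal.mem_bot] at hx
      have hx0 : jA x = 0 := hx
      have hxz : x = 0 := hjAinj (by rw [hx0]; simp)
      rw [hxz]; exact Ideal.zero_mem _)
  haveI := hPPprime
  have hmemPP : ∀ a, jA a ∈ PP ↔ a ∈ pA := by
    intro a
    rw [← hPPcomap, Ideal.mem_comap, halgjA]
    rfl
  haveI : CharP F 2 := charP_of_injective_algebraMap (algebraMap (ZMod 2) F).injective 2
  have h2F : (2 : F) = 0 := by
    have := CharP.cast_eq_zero F 2
    exact_mod_cast this
  have h2pA : (2 : AdjoinRoot (Polynomial.cyclotomic s ℤ)) ∈ pA := by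
    rw [hpA, RingHom.mem_ker, map_ofNat]
    exact_mod_cast h2F
  have h2PP : (2 : O) ∈ PP := by
    have := (hmemPP 2).mpr h2pA
    rwa [map_ofNat] at this
  have h2One : (2 : O) ≠ 0 := by
    intro h
    have := congrArg (algebraMap O K) h
    rw [map_ofNat, map_zero] at this
    exact two_ne_zero this
  have hPPbot : PP ≠ ⊥ := by
    intro h
    rw [h, Ideal.mem_bot] at h2PP
    exact h2One h2PP
  have hPPmax : PP.IsMaximal := hPPprime.isMaximal hPPbot
  set TT : Ideal O := Ideal.map (τO : O →+* O) PP with hTT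
  have hTTcomap : TT = Ideal.comap (τO.symm : O →+* O) PP := (Ideal.comap_symm τO).symm
  haveI hTTprime : TT.IsPrime := by
    rw [hTTcomap]
    exact Ideal.IsPrime.comap _
  have hTTmax : TT.IsMaximal := by
    rw [hTTcomap]
    exact Ideal.comap_isMaximal_of_surjective _ τO.symm.surjective
  -- the element w distinguishing PP and TT
  set w : AdjoinRoot (Polynomial.cyclotomic s ℤ) := AdjoinRoot.mk _ P with hw
  have hcompF : (algebraMap (ZMod 2) F).comp (Int.castRingHom (ZMod 2)) = algebraMap ℤ F :=
    Subsingleton.elim _ _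
  have hψAw : ψA w = 0 := by
    rw [hψA, hw, AdjoinRoot.liftHom_mk, Polynomial.aeval_def, Polynomial.eval₂_eq_eval_map]
    have : P.map (algebraMap ℤ F) = Mf := by
      rw [← hcompF, ← Polynomial.map_map, hP]
    rw [show algebraMap ℤ F = algebraMap ℤ F from rfl, this]
    exact hMf0
  have hψA'w : ψA' w ≠ 0 := by
    rw [hψA', hw, AdjoinRoot.liftHom_mk, Polynomial.aeval_def, Polynomial.eval₂_eq_eval_map]
    have : P.map (algebraMap ℤ F) = Mf := by
      rw [← hcompF, ← Polynomial.map_map, hP]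
    rw [this]
    exact hMfinv
  have hwPP : jA w ∈ PP := (hmemPP w).mpr (by rw [hpA, RingHom.mem_ker]; exact hψAw)
  have hτwPP : jA (τA w) ∉ PP := by
    rw [hmemPP]
    intro hmem
    rw [hpA, RingHom.mem_ker] at hmem
    exact hψA'w (by rw [← hψτ]; exact hmem)
  have hPPTT : PP ≠ TT := by
    intro he
    apply hτwPP
    rw [hjτ, he, hTT]
    exact Ideal.mem_map_of_mem _ hwPP
  -- class group: some power of PP is principal
  haveI : Fintype (ClassGroup O) := NumberField.RingOfIntegers.instFintypeClassGroup K
  set hcl : ℕ := Fintype.card (ClassGroup O) with hhcl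
  have hclpos : 0 < hcl := Fintype.card_pos
  have hPPnzd : PP ∈ nonZeroDivisors (Ideal O) := by
    rw [mem_nonZeroDivisors_iff_ne_zero]
    simpa [Submodule.zero_eq_bot] using hPPbot
  have hprinc : Submodule.IsPrincipal (PP ^ hcl) := by
    have h1 : ClassGroup.mk0 ⟨PP, hPPnzd⟩ ^ hcl = 1 := pow_card_eq_one
    have h2 : (⟨PP, hPPnzd⟩ : nonZeroDivisors (Ideal O)) ^ hcl
        = ⟨PP ^ hcl, pow_mem hPPnzd hcl⟩ := by
      ext
      simp
    rw [← map_pow, h2] at h1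
    exact (ClassGroup.mk0_eq_one_iff _).mp h1
  obtain ⟨α₀, hα₀⟩ : ∃ α₀ : O, PP ^ hcl = Ideal.span {α₀} := by
    obtain ⟨a, ha⟩ := hprinc.principal
    exact ⟨a, ha⟩
  have hα₀PP : α₀ ∈ PP := by
    have h1 : α₀ ∈ PP ^ hcl := by rw [hα₀]; exact Ideal.mem_span_singleton_self α₀
    exact Ideal.pow_le_self hclpos.ne' h1
  have hspanτ : Ideal.span {τO α₀} = TT ^ hcl := by
    have h1 : Ideal.map (τO : O →+* O) (Ideal.span {α₀}) = Ideal.span {τO α₀} := by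
      rw [Ideal.map_span, Set.image_singleton]
      rfl
    rw [← h1, ← hα₀, Ideal.map_pow, hTT]
  have h2TT : (2 : O) ∈ TT := by
    rw [hTTcomap, Ideal.mem_comap, map_ofNat]
    exact h2PP
  have hcopPT : PP ⊔ TT = ⊤ := hPPmax.coprime_of_ne hTTmax hPPTT
  have h2inPT : (2 : O) ∈ PP * TT := by
    rw [Ideal.mul_eq_inf_of_coprime hcopPT]
    exact ⟨h2PP, h2TT⟩
  have h2pow : (2 : O) ^ hcl ∈ Ideal.span {α₀ * τO α₀} := by
    have h1 : (2 : O) ^ hcl ∈ (PP * TT) ^ hcl := Ideal.pow_mem_pow h2inPT hcl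
    have h2 : (PP * TT) ^ hcl = Ideal.span {α₀ * τO α₀} := by
      rw [mul_pow, hα₀, ← hspanτ, Ideal.span_singleton_mul_span_singleton]
    rwa [h2] at h1
  obtain ⟨γ, hγ⟩ : ∃ γ : O, (2 : O) ^ hcl = α₀ * τO α₀ * γ := by
    rw [Ideal.mem_span_singleton] at h2pow
    obtain ⟨c, hc⟩ := h2pow
    exact ⟨c, hc⟩
  -- the discriminant: an odd integer killing O / Z[ζ]
  have hbint : ∀ i, IsIntegral ℤ (pb.basis i) := by
    intro i
    rw [pb.basis_eq_pow i, hpbgen]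
    exact (hζ.isIntegral spos).pow _
  have hDint : IsIntegral ℤ (Algebra.discr ℚ pb.basis) := Algebra.discr_isIntegral ℚ hbint
  obtain ⟨cZ, hcZ⟩ : ∃ c : ℤ, algebraMap ℤ ℚ c = Algebra.discr ℚ pb.basis :=
    IsIntegrallyClosed.isIntegral_iff.mp hDint
  have hcZne : cZ ≠ 0 := by
    intro h
    have := Algebra.discr_not_zero_of_basis ℚ pb.basis
    rw [← hcZ, h, map_zero] at this
    exact this rfl
  -- oddness of the discriminant
  have hcZodd : ¬ ((2:ℤ) ∣ cZ) := by
    -- u₀ = Φ'_s(ζ) as an algebraic integer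
    set u₀ : O := (Polynomial.aeval ζO) (Polynomial.derivative (Polynomial.cyclotomic s ℤ)) with hu₀
    set Qz : Polynomial ℤ := ∏ i ∈ s.divisors.erase s, Polynomial.cyclotomic i ℤ with hQz
    set q₀ : O := (Polynomial.aeval ζO) Qz with hq₀
    have hXs : (Polynomial.X ^ s - 1 : Polynomial ℤ) =
        Polynomial.cyclotomic s ℤ * Qz := by
      have h1 := Finset.mul_prod_erase s.divisors (fun i => Polynomial.cyclotomic i ℤ)
        (Nat.mem_divisors_self s spos.ne')
      rw [Polynomial.prod_cyclotomic_eq_X_pow_sub_one spos ℤ] at h1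
      exact h1.symm
    -- s * ζ^(s-1) = u₀ * q₀ in O
    have hkey : (s : O) * ζO ^ (s - 1) = u₀ * q₀ := by
      have hder := congrArg Polynomial.derivative hXs
      rw [Polynomial.derivative_sub, Polynomial.derivative_one, Polynomial.derivative_X_pow,
        Polynomial.derivative_mul, sub_zero] at hder
      have := congrArg (Polynomial.aeval ζO) hder
      rw [map_mul, map_add, map_mul, map_mul, haevalζO, zero_mul, add_zero] at this
      simpa [hu₀, hq₀, Polynomial.aeval_def] using this
    -- norms
    have hNζ : ∃ e : ℚ, (e = 1 ∨ e = -1) ∧ Algebra.norm ℚ ζ = e := by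
      refine ⟨Algebra.norm ℚ ζ, ?_, rfl⟩
      have h1 : (Algebra.norm ℚ ζ) ^ s = 1 := by
        rw [← map_pow, hζ.pow_eq_one, map_one]
      rcases (pow_eq_one_iff_cases).mp h1 with h | h | h
      · omega
      · exact Or.inl h
      · exact Or.inr h.1
    obtain ⟨eζ, heζ, hNζval⟩ := hNζ
    -- coe to K versions
    have hcoeu : (algebraMap O K) u₀ =
        (Polynomial.aeval ζ) (Polynomial.derivative (Polynomial.cyclotomic s ℤ)) := by
      rw [hu₀, ← Polynomial.aeval_algebraMap_apply, hζOcoe]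
    have hcoeq : (algebraMap O K) q₀ = (Polynomial.aeval ζ) Qz := by
      rw [hq₀, ← Polynomial.aeval_algebraMap_apply, hζOcoe]
    have hNu : IsIntegral ℤ (Algebra.norm ℚ ((algebraMap O K) u₀)) :=
      Algebra.isIntegral_norm ℚ u₀.2
    have hNq : IsIntegral ℤ (Algebra.norm ℚ ((algebraMap O K) q₀)) :=
      Algebra.isIntegral_norm ℚ q₀.2
    obtain ⟨nu, hnu⟩ := IsIntegrallyClosed.isIntegral_iff.mp hNu
    obtain ⟨nq, hnq⟩ := IsIntegrallyClosed.isIntegral_iff.mp hNq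
    -- norm equation
    have hKkey : ((s:K)) * (algebraMap O K ζO) ^ (s - 1)
        = (algebraMap O K u₀) * (algebraMap O K q₀) := by
      have := congrArg (algebraMap O K) hkey
      rw [map_mul, map_mul, map_pow, map_natCast] at this
      exact this
    have hNkey : (s:ℚ) ^ (Module.finrank ℚ K) * eζ ^ (s-1) = (nu:ℚ) * (nq:ℚ) := by
      have h1 := congrArg (Algebra.norm ℚ) hKkey
      rw [map_mul, map_mul, map_pow, hζOcoe, hNζval, ← hnu, ← hnq] at h1
      have h2 : ((s:K)) = algebraMap ℚ K (s:ℚ) := by simp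
      rw [h2, Algebra.norm_algebraMap] at h1
      have h3 : algebraMap ℤ ℚ nu * algebraMap ℤ ℚ nq = (nu:ℚ) * (nq:ℚ) := by
        simp [algebraMap_int_eq]
      rw [h3] at h1
      exact h1
    -- eζ ^ (s-1) = 1
    have heζpow : eζ ^ (s - 1) = 1 := by
      have hev : Even (s - 1) := Nat.Odd.sub_odd hodd odd_one
      rcases heζ with h | h
      · rw [h, one_pow]
      · rw [h]; exact hev.neg_one_pow
    rw [heζpow, mul_one] at hNkey
    have hZeq : (s:ℤ) ^ (Module.finrank ℚ K) = nu * nq := by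
      exact_mod_cast hNkey
    have hodds : ¬ ((2:ℤ) ∣ (s:ℤ) ^ (Module.finrank ℚ K)) := by
      intro h
      have h2 : Prime (2:ℤ) := Int.prime_two
      have h3 := h2.dvd_of_dvd_pow h
      have h4 : (2:ℕ) ∣ s := by exact_mod_cast h3
      rcases hodd with ⟨m, rfl⟩; omega
    have hnuodd : ¬ ((2:ℤ) ∣ nu) := by
      intro h
      exact hodds (hZeq ▸ h.mul_right nq)
    -- D = ± norm u
    have hDnorm : Algebra.discr ℚ pb.basis =
        (-1) ^ (Module.finrank ℚ K * (Module.finrank ℚ K - 1) / 2) *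
          Algebra.norm ℚ ((Polynomial.aeval pb.gen) (Polynomial.derivative (minpoly ℚ pb.gen))) :=
      Algebra.discr_powerBasis_eq_norm ℚ pb
    have hderm : (Polynomial.aeval pb.gen) (Polynomial.derivative (minpoly ℚ pb.gen))
        = algebraMap O K u₀ := by
      rw [hpbgen, ← Polynomial.cyclotomic_eq_minpoly_rat hζ spos, hcoeu]
      have hmapder : Polynomial.derivative (Polynomial.cyclotomic s ℚ)
          = (Polynomial.derivative (Polynomial.cyclotomic s ℤ)).map (algebraMap ℤ ℚ) := by
        rw [← Polynomial.derivative_map, Polynomial.map_cyclotomic]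
      rw [hmapder, Polynomial.aeval_map_algebraMap]
    intro h2cZ
    apply hnuodd
    have h9 : algebraMap ℤ ℚ cZ
        = (-1) ^ (Module.finrank ℚ K * (Module.finrank ℚ K - 1) / 2) * algebraMap ℤ ℚ nu := by
      rw [hcZ, hDnorm, hderm, ← hnu]
    have hZnu : cZ = (-1) ^ (Module.finrank ℚ K * (Module.finrank ℚ K - 1) / 2) * nu := by
      have h10 : (cZ:ℚ) = (((-1) ^ (Module.finrank ℚ K * (Module.finrank ℚ K - 1) / 2) * nu : ℤ) : ℚ) := by
        push_cast
        simpa [algebraMap_int_eq] using h9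
      exact_mod_cast h10
    rcases Nat.even_or_odd (Module.finrank ℚ K * (Module.finrank ℚ K - 1) / 2) with he | ho
    · rw [he.neg_one_pow, one_mul] at hZnu; rwa [← hZnu]
    · rw [ho.neg_one_pow] at hZnu
      have hneg : nu = -cZ := by omega
      rw [hneg]; exact h2cZ.neg_right
  -- cZ • O ⊆ range of jA
  have hcmul : ∀ x : O, ∃ a, jA a = algebraMap ℤ O cZ * x := by
    intro x
    have hint : IsIntegral ℤ pb.gen := by rw [hpbgen]; exact hζ.isIntegral spos
    have hadj : Algebra.discr ℚ pb.basis • (algebraMap O K x) ∈ Algebra.adjoin ℤ {pb.gen} :=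
      Algebra.discr_mul_isIntegral_mem_adjoin ℚ hint x.2
    rw [hpbgen] at hadj
    have hrange : Algebra.adjoin ℤ {ζ} ≤ ιK.range := by
      apply Algebra.adjoin_le
      intro y hy
      rw [Set.mem_singleton_iff] at hy
      subst hy
      apply (AlgHom.mem_range ιK).mpr
      exact ⟨AdjoinRoot.root _, by rw [hιK]; exact AdjoinRoot.liftHom_root _ _⟩
    obtain ⟨a, ha⟩ := (AlgHom.mem_range ιK).mp (hrange hadj)
    refine ⟨a, NumberField.RingOfIntegers.coe_injective ?_⟩
    rw [hιjA, ha]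
    rw [show Algebra.discr ℚ pb.basis • (algebraMap O K x) = algebraMap ℚ K (Algebra.discr ℚ pb.basis) * algebraMap O K x from Algebra.smul_def _ _, ← hcZ, map_mul]
    rw [← IsScalarTower.algebraMap_apply ℤ ℚ K, IsScalarTower.algebraMap_apply ℤ O K]
  -- finite quotient modulo cZ
  set cO : O := algebraMap ℤ O cZ with hcO
  have hcOne : cO ≠ 0 := by
    intro h
    apply hcZne
    have : algebraMap O K cO = 0 := by rw [h, map_zero]
    rw [hcO, ← IsScalarTower.algebraMap_apply ℤ O K, eq_intCast] at this
    exact_mod_cast this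
  set Ic : Ideal O := Ideal.span {cO} with hIc
  have hIcbot : Ic ≠ ⊥ := by
    rw [hIc, Ne, Ideal.span_singleton_eq_bot]
    exact hcOne
  haveI : Fintype (O ⧸ Ic) := @Fintype.ofFinite _ (Ideal.finiteQuotientOfFreeOfNeBot Ic hIcbot)
  set π := Ideal.Quotient.mk Ic with hπ
  have hπc : π cO = 0 := by
    rw [hπ, Ideal.Quotient.eq_zero_iff_mem, hIc]
    exact Ideal.mem_span_singleton_self _
  have h2unit : IsUnit (π 2) := by
    have hcop : IsCoprime (2:ℤ) cZ := (Int.prime_two.coprime_iff_not_dvd).mpr hcZodd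
    obtain ⟨a, b, hab⟩ := hcop
    have h2 : (algebraMap ℤ O a) * 2 + (algebraMap ℤ O b) * cO = 1 := by
      have h2' := congrArg (algebraMap ℤ O) hab
      rw [map_add, map_mul, map_mul, map_one, map_ofNat] at h2'
      rw [hcO]; exact h2'
    have h3 : π (algebraMap ℤ O a) * π 2 = 1 := by
      have h4 := congrArg π h2
      rw [map_add, map_mul, map_mul, hπc, mul_zero, add_zero, map_one] at h4
      exact h4
    exact IsUnit.of_mul_eq_one _ ((mul_comm _ _).trans h3)
  have h2powunit : IsUnit (π ((2:O) ^ hcl)) := by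
    rw [map_pow]; exact h2unit.pow hcl
  have hαunit : IsUnit (π α₀) := by
    apply isUnit_of_mul_isUnit_left (y := π (τO α₀ * γ))
    rw [← map_mul, ← mul_assoc, ← hγ]
    exact h2powunit
  have hγunit : IsUnit (π γ) := by
    apply isUnit_of_mul_isUnit_left (y := π (α₀ * τO α₀))
    rw [← map_mul, mul_comm γ, ← hγ]
    exact h2powunit
  set eU : ℕ := Fintype.card (O ⧸ Ic)ˣ with heU
  have heUpos : 0 < eU := Fintype.card_pos
  have hpow_e : ∀ x : O, IsUnit (π x) → ∃ μ : O, x ^ eU = 1 + cO * μ := by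
    intro x hx
    have h1 : (hx.unit) ^ eU = 1 := pow_card_eq_one
    have h2 : π (x ^ eU) = 1 := by
      rw [map_pow, ← hx.unit_spec, ← Units.val_pow_eq_pow_val, h1, Units.val_one]
    have h3 : x ^ eU - 1 ∈ Ic := by
      rw [← Ideal.Quotient.eq_zero_iff_mem, map_sub, h2, map_one, sub_self]
    rw [hIc, Ideal.mem_span_singleton] at h3
    obtain ⟨μ, hμ⟩ := h3
    exact ⟨μ, by rw [← hμ]; ring⟩
  obtain ⟨μ1, hμ1⟩ := hpow_e α₀ hαunit
  obtain ⟨μ2, hμ2⟩ := hpow_e γ hγunit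
  obtain ⟨aμ1, haμ1⟩ := hcmul μ1
  obtain ⟨aμ2, haμ2⟩ := hcmul μ2
  set a1 := 1 + aμ1 with ha1def
  set ag := 1 + aμ2 with hagdef
  have ha1 : jA a1 = α₀ ^ eU := by
    rw [ha1def, map_add, map_one, haμ1, hμ1, hcO]
  have hag : jA ag = γ ^ eU := by
    rw [hagdef, map_add, map_one, haμ2, hμ2, hcO]
  have hτa1 : jA (τA a1) = (τO α₀) ^ eU := by
    rw [hjτ, ha1, map_pow]
  -- the key identity
  have hOid : jA (a1 * τA a1 * ag) = (2:O) ^ (hcl * eU) := by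
    rw [map_mul, map_mul, ha1, hτa1, hag, pow_mul, hγ]
    ring
  have hAid : a1 * τA a1 * ag = (2 : AdjoinRoot (Polynomial.cyclotomic s ℤ)) ^ (hcl * eU) := by
    apply hjAinj
    rw [hOid, map_pow, map_ofNat]
  refine ⟨ΦA a1, ΦA ag, hΦmem a1, hΦmem ag, ⟨hcl * eU, ?_⟩, ?_⟩
  · have := congrArg ΦA hAid
    rw [map_mul, map_mul, map_pow, map_ofNat, hΦτ] at this
    exact this
  · intro m hm heq
    have h1 : ΦA (a1 ^ m) = ΦA ((τA a1) ^ m) := by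
      rw [map_pow, map_pow, hΦτ]
      exact heq
    have h2 : a1 ^ m = (τA a1) ^ m := hΦinj h1
    have h3 : α₀ ^ (eU * m) = (τO α₀) ^ (eU * m) := by
      have := congrArg jA h2
      rw [map_pow, map_pow, ha1, hτa1, ← pow_mul, ← pow_mul] at this
      exact this
    have h4 : (τO α₀) ^ (eU * m) ∈ PP := by
      rw [← h3]
      exact Ideal.pow_mem_of_mem PP hα₀PP _ (by positivity)
    have h5 : τO α₀ ∈ PP := hPPprime.mem_of_pow_mem _ h4
    have h6 : TT ^ hcl ≤ PP := by
      rw [← hspanτ, Ideal.span_le]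
      simpa using h5
    have h7 : TT ≤ PP := hPPprime.le_of_pow_le h6
    have h8 : TT = PP := hTTmax.eq_of_le hPPprime.ne_top h7
    exact hPPTT h8.symm






/-- If `n = 2^k·s` with `s` odd and there is no `t > 0` with `2^t ≡ −1 (mod s)`, then
`{r ∈ ℛₙ : |r| = 1}` contains an element of infinite order. -/
theorem stmt7 (n k s : ℕ) (hk : 1 ≤ k) (hs : Odd s) (hn : n = 2 ^ k * s)
    (ht : ¬ ∃ t : ℕ, 0 < t ∧ (2 : ℤ) ^ t ≡ -1 [ZMOD (s : ℤ)]) :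
    ∃ r ∈ Rring n, ‖r‖ = 1 ∧ ∀ m : ℕ, 0 < m → r ^ m ≠ 1 := by
  have hs0 : s ≠ 0 := by rintro rfl; rcases hs with ⟨m, hm⟩; omega
  have hs1 : s ≠ 1 := by
    rintro rfl
    exact ht ⟨1, one_pos, by exact_mod_cast Int.modEq_one⟩
  have h3 : 3 ≤ s := by rcases hs with ⟨m, hm⟩; omega
  have hnd : ∀ t : ℕ, 0 < t → ¬ (s ∣ 2 ^ t + 1) := by
    intro t ht0 hdvd
    apply ht
    refine ⟨t, ht0, ?_⟩
    have h1 : (s:ℤ) ∣ (2:ℤ) ^ t + 1 := by exact_mod_cast hdvd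
    rw [Int.modEq_iff_dvd]
    have h2 : (-1 : ℤ) - 2 ^ t = -(2 ^ t + 1) := by ring
    rw [h2]
    exact dvd_neg.mpr h1
  have hnpos : 0 < n := by
    rw [hn]; exact Nat.mul_pos (pow_pos (by norm_num) k) (by omega)
  set ω := Complex.exp (Complex.I * (Real.pi / n)) with hω
  set z := ω ^ (2 ^ (k+1)) with hzdef
  have hzexp : z = Complex.exp (2 * Real.pi * Complex.I / s) := by
    rw [hzdef, hω, ← Complex.exp_nat_mul]
    congr 1
    have hcast : (n:ℂ) = 2 ^ k * s := by rw [hn]; push_cast; ring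
    have hsne : (s:ℂ) ≠ 0 := Nat.cast_ne_zero.mpr hs0
    have h2k : (2:ℂ) ^ k ≠ 0 := pow_ne_zero k two_ne_zero
    rw [hcast]
    push_cast
    field_simp
    ring
  have hz : IsPrimitiveRoot z s := by
    rw [hzexp]; exact Complex.isPrimitiveRoot_exp s hs0
  obtain ⟨x, g, hxmem, hgmem, ⟨N, hid⟩, hinf⟩ := master s h3 hs hnd z hz
  have hωR : ω ∈ Rring n := Subring.subset_closure (Or.inl rfl)
  have hzR : z ∈ Rring n := pow_mem hωR _
  have hclosR : Subring.closure {z} ≤ Rring n := by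
    apply Subring.closure_le.mpr
    intro y hy
    rw [Set.mem_singleton_iff] at hy
    subst hy
    exact hzR
  have hhalfR : (1/2 : ℂ) ∈ Rring n := Subring.subset_closure (Or.inr rfl)
  have h2N : (2:ℂ) ^ N ≠ 0 := pow_ne_zero N two_ne_zero
  have hx0 : x ≠ 0 := by
    intro h; rw [h, zero_mul, zero_mul] at hid; exact h2N hid.symm
  have hcx0 : (starRingEnd ℂ) x ≠ 0 := by
    intro h
    exact hx0 ((starRingEnd ℂ).injective (by rw [h, map_zero]))
  have hg0 : g ≠ 0 := by
    intro h; rw [h, mul_zero] at hid; exact h2N hid.symm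
  have hrval : x ^ 2 * g * (1/2 : ℂ) ^ N = x / (starRingEnd ℂ) x := by
    rw [eq_div_iff hcx0]
    have h5 : ((1:ℂ)/2) ^ N = ((2:ℂ) ^ N)⁻¹ := by
      rw [one_div, inv_pow]
    rw [h5]
    field_simp
    linear_combination hid
  refine ⟨x ^ 2 * g * (1/2 : ℂ) ^ N, ?_, ?_, ?_⟩
  · exact mul_mem (mul_mem (hclosR (pow_mem hxmem 2)) (hclosR hgmem)) (pow_mem hhalfR N)
  · rw [hrval, norm_div, Complex.norm_conj]
    exact div_self (norm_ne_zero_iff.mpr hx0)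
  · intro m hm h1
    apply hinf m hm
    rw [hrval, div_pow] at h1
    exact (div_eq_one_iff_eq (pow_ne_zero m hcx0)).mp h1
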